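/- Let X be a nontrivial mm-space of finite diameter (i.e. μ_X is not a Dirac measure), let 1 ≤ p ≤ +∞, and assume inf{d_X(x,y) : x,y ∈ X, x ≠ y} > 0 if 1 < p < +∞. Let (t_n) be a sequence of positive real numbers with n^{1/(2p)} t_n → 0 as n → ∞ (where n^{1/(2∞)} := 1). Then the sequence {t_n X_p^n}_{n=1}^∞ is a Lévy family, i.e. ObsDiam(t_n X_p^n; -κ) → 0 as n → ∞ for every κ > 0. -/

import Mathlib

/-!
A function that is 1-Lipschitz for the `l_p`-metric on `Xⁿ` is Hölder for the `l_1`-metric: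
if all distances in `X` are at most `D`, then `d_p ≤ D ^ (1 - 1/p) * d_1 ^ (1/p)`.
The `l_1`-distance to a set `A` of measure at least `1/2` changes by at most `D` when one
coordinate changes, so by the Efron–Stein inequality its variance is at most `n D²`; it vanishes
on `A`, so Chebyshev bounds its mean by `√(2n) D`, and a second use of Chebyshev makes it
`O(√n D)` outside a set of small measure. Applied to the two half-spaces `{f ≤ m}` and `{f ≥ m}`
at a median `m` of `f`, this confines `f` to an interval of length `O(n ^ (1/(2p)) t)` with
probability at least `1 - κ`.
-/

open MeasureTheory Filter Topology Bornology
open scoped ENNReal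

noncomputable section

def partialDiam (ν : Measure ℝ) (α : ℝ) : ℝ :=
  sInf {r : ℝ | ∃ A : Set ℝ, MeasurableSet A ∧ IsBounded A ∧
    ENNReal.ofReal α ≤ ν A ∧ r = Metric.diam A}

def obsDiam {X : Type*} [MeasurableSpace X] (d : X → X → ℝ)
    (μ : Measure X) (κ : ℝ) : ℝ :=
  sSup {r : ℝ | ∃ f : X → ℝ, Measurable f ∧ (∀ x y, |f x - f y| ≤ d x y) ∧
    r = partialDiam (μ.map f) (1 - κ)}

def lpDist {X : Type*} (d : X → X → ℝ) (p : ℝ) {n : ℕ} (x y : Fin n → X) : ℝ :=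
  (∑ i, d (x i) (y i) ^ p) ^ (1 / p)

def lpDist' {X : Type*} (d : X → X → ℝ) (p : ℝ≥0∞) {n : ℕ} (x y : Fin n → X) : ℝ :=
  if p = ∞ then ⨆ i, d (x i) (y i) else lpDist d p.toReal x y

open ProbabilityTheory Set

section Probability

variable {Ω : Type*} [MeasurableSpace Ω] {μ : Measure Ω} [IsProbabilityMeasure μ]

lemma ofReal_one_sub_le_measure {S : Set Ω} {c : ℝ} (hc : 0 ≤ c)
    (hS : μ Sᶜ ≤ ENNReal.ofReal c) : ENNReal.ofReal (1 - c) ≤ μ S := by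
  rw [ENNReal.ofReal_sub _ hc, ENNReal.ofReal_one, tsub_le_iff_right]
  calc 1 = μ (S ∪ Sᶜ) := by rw [union_compl_self, measure_univ]
    _ ≤ μ S + μ Sᶜ := measure_union_le _ _
    _ ≤ μ S + ENNReal.ofReal c := by gcongr

lemma variance_le_sq_of_abs_sub_le {F : Ω → ℝ} (hF : AEMeasurable F μ) {c : ℝ}
    (hc : ∀ ω ω', |F ω - F ω'| ≤ c) : Var[F; μ] ≤ c ^ 2 := by
  obtain ⟨ω₀⟩ := nonempty_of_isProbabilityMeasure μ
  have hIcc : ∀ ω, F ω ∈ Icc (F ω₀ - c) (F ω₀ + c) := fun ω => by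
    have := abs_le.1 (hc ω ω₀)
    constructor <;> linarith
  calc Var[F; μ] ≤ ((F ω₀ + c - (F ω₀ - c)) / 2) ^ 2 :=
        variance_le_sq_of_bounded (ae_of_all _ hIcc) hF
    _ = c ^ 2 := by ring

lemma abs_integral_le_sqrt_two_variance {F : Ω → ℝ} (hF : MemLp F 2 μ) {A : Set Ω}
    (hA : 2⁻¹ ≤ μ A) (hFA : ∀ x ∈ A, F x = 0) : |μ[F]| ≤ √(2 * Var[F; μ]) := by
  rcases eq_or_lt_of_le (abs_nonneg μ[F]) with hE | hE
  · rw [← hE]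
    positivity
  have hsub : A ⊆ {x | |μ[F]| ≤ |F x - μ[F]|} := fun x hx => by simp [hFA x hx]
  have hcheb : ENNReal.ofReal 2⁻¹ ≤ ENNReal.ofReal (Var[F; μ] / |μ[F]| ^ 2) := by
    rw [ENNReal.ofReal_inv_of_pos two_pos, ENNReal.ofReal_ofNat]
    exact hA.trans ((measure_mono hsub).trans (meas_ge_le_variance_div_sq hF hE))
  rw [ENNReal.ofReal_le_ofReal_iff (div_nonneg (variance_nonneg _ _) (sq_nonneg _)),
    le_div_iff₀ (by positivity)] at hcheb
  exact Real.le_sqrt_of_sq_le (by linarith)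

lemma measure_ge_sqrt_two_variance_add_le {F : Ω → ℝ} (hF : MemLp F 2 μ) {A : Set Ω}
    (hA : 2⁻¹ ≤ μ A) (hFA : ∀ x ∈ A, F x = 0) {s : ℝ} (hs : 0 < s) :
    μ {x | √(2 * Var[F; μ]) + s ≤ F x} ≤ ENNReal.ofReal (Var[F; μ] / s ^ 2) := by
  have hE := (le_abs_self _).trans (abs_integral_le_sqrt_two_variance hF hA hFA)
  refine (measure_mono fun x (hx : _ ≤ F x) => ?_).trans (meas_ge_le_variance_div_sq hF hs)
  show s ≤ |F x - μ[F]|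
  exact le_abs.2 (Or.inl (by linarith))

end Probability

lemma exists_median (ν : Measure ℝ) [IsProbabilityMeasure ν] :
    ∃ m, 2⁻¹ ≤ ν (Iic m) ∧ 2⁻¹ ≤ ν (Ici m) := by
  set T := {s | 2⁻¹ ≤ cdf ν s}
  obtain ⟨s₀, hs₀⟩ :=
    ((tendsto_cdf_atTop ν).eventually (lt_mem_nhds (by norm_num : (2⁻¹ : ℝ) < 1))).exists
  obtain ⟨b, hb⟩ := eventually_atBot.1 ((tendsto_cdf_atBot ν).eventually
    (gt_mem_nhds (by norm_num : (0 : ℝ) < 2⁻¹)))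
  have hT_bdd : BddBelow T := ⟨b, fun s hs => by
    by_contra! h
    exact (hb s h.le).not_ge hs⟩
  set m := sInf T
  refine ⟨m, ?_, ?_⟩
  · have hright : ∀ s > m, s ∈ T := fun s hs => by
      obtain ⟨s', hs', hs's⟩ := exists_lt_of_csInf_lt ⟨s₀, hs₀.le⟩ hs
      exact hs'.trans (monotone_cdf ν hs's.le)
    have hm : 2⁻¹ ≤ cdf ν m :=
      ge_of_tendsto (((cdf ν).right_continuous m).mono Ioi_subset_Ici_self)
        (eventually_nhdsWithin_of_forall hright)
    rw [← ofReal_cdf, ← ENNReal.ofReal_ofNat, ← ENNReal.ofReal_inv_of_pos two_pos]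
    exact ENNReal.ofReal_le_ofReal hm
  · have hleft : Function.leftLim (cdf ν) m ≤ 2⁻¹ :=
      le_of_tendsto ((monotone_cdf ν).tendsto_leftLim m) (eventually_nhdsWithin_of_forall
        fun s (hs : s ∈ Iio m) => (not_le.1 fun h => (csInf_le hT_bdd h).not_gt hs).le)
    rw [← measure_cdf ν, (cdf ν).measure_Ici (tendsto_cdf_atTop ν),
      ← ENNReal.ofReal_ofNat, ← ENNReal.ofReal_inv_of_pos two_pos]
    exact ENNReal.ofReal_le_ofReal (by linarith)

lemma variance_prod_le {X Y : Type*} [MeasurableSpace X] [MeasurableSpace Y]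
    (μ : Measure X) (ν : Measure Y) [IsProbabilityMeasure μ] [IsProbabilityMeasure ν]
    {F : X × Y → ℝ} (hF : Measurable F) {M : ℝ} (hM : ∀ w, |F w| ≤ M)
    {a b : ℝ} (hslice : ∀ y, Var[fun x => F (x, y); μ] ≤ a)
    (hmean : Var[fun y => ∫ x, F (x, y) ∂μ; ν] ≤ b) :
    Var[F; μ.prod ν] ≤ a + b := by
  set G : Y → ℝ := fun y => ∫ x, F (x, y) ∂μ
  set H : Y → ℝ := fun y => ∫ x, F (x, y) ^ 2 ∂μ
  have hGM : ∀ y, |G y| ≤ M := fun y => by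
    simpa using norm_integral_le_of_norm_le_const (μ := μ) (f := fun x => F (x, y))
      (ae_of_all _ fun x => hM (x, y))
  have hHM : ∀ y, |H y| ≤ M ^ 2 := fun y => by
    simpa using norm_integral_le_of_norm_le_const (μ := μ) (f := fun x => F (x, y) ^ 2)
      (ae_of_all _ fun x => by simpa [abs_pow] using pow_le_pow_left₀ (abs_nonneg _) (hM (x, y)) 2)
  have hG : MemLp G 2 ν := .of_bound
    hF.stronglyMeasurable.integral_prod_left'.aestronglyMeasurable M (ae_of_all _ hGM)
  have hH : Integrable H ν := .of_bound
    (hF.pow_const 2).stronglyMeasurable.integral_prod_left'.aestronglyMeasurable _ (ae_of_all _ hHM)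
  have hF2 : MemLp F 2 (μ.prod ν) := .of_bound hF.aestronglyMeasurable M (ae_of_all _ hM)
  have hslice_eq : ∀ y, Var[fun x => F (x, y); μ] = H y - G y ^ 2 := fun y =>
    variance_eq_sub (.of_bound (hF.comp measurable_prodMk_right).aestronglyMeasurable M
      (ae_of_all _ fun x => hM (x, y)))
  have hslice_int : ∫ y, H y ∂ν - ∫ y, G y ^ 2 ∂ν ≤ a := by
    rw [← integral_sub hH hG.integrable_sq]
    calc ∫ y, H y - G y ^ 2 ∂ν ≤ ∫ _, a ∂ν := integral_mono (hH.sub hG.integrable_sq)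
          (integrable_const a) fun y => (hslice_eq y).symm.trans_le (hslice y)
      _ = a := by simp
  rw [variance_eq_sub hG] at hmean
  rw [variance_eq_sub hF2]
  simp only [Pi.pow_apply] at hmean ⊢
  rw [integral_prod_symm _ (hF2.integrable one_le_two), integral_prod_symm _ hF2.integrable_sq]
  linarith

theorem variance_pi_le_of_bounded_differences {X : Type*} [MeasurableSpace X]
    (μ : Measure X) [IsProbabilityMeasure μ] {c M : ℝ} {n : ℕ} {F : (Fin n → X) → ℝ}
    (hF : Measurable F) (hM : ∀ x, |F x| ≤ M)
    (hc : ∀ x i a, |F (Function.update x i a) - F x| ≤ c) :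
    Var[F; Measure.pi fun _ : Fin n => μ] ≤ n * c ^ 2 := by
  induction n with
  | zero =>
    simpa using variance_le_sq_of_abs_sub_le (μ := Measure.pi fun _ : Fin 0 => μ)
      hF.aemeasurable (c := 0) fun x y => by simp [Subsingleton.elim x y]
  | succ n ih =>
    have hcons : MeasurePreserving (fun w : X × (Fin n → X) => (Fin.cons w.1 w.2 : Fin (n + 1) → X))
        (μ.prod (Measure.pi fun _ : Fin n => μ)) (Measure.pi fun _ : Fin (n + 1) => μ) := by
      convert (measurePreserving_piFinSuccAbove (fun _ : Fin (n + 1) => μ) 0).symm using 1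
      funext w
      simp [MeasurableEquiv.piFinSuccAbove_symm_apply, Fin.insertNthEquiv, Fin.insertNth_zero']
    rw [← hcons.variance_fun_comp hF.aemeasurable]
    have hF' : Measurable fun w : X × (Fin n → X) => F (Fin.cons w.1 w.2) :=
      hF.comp hcons.measurable
    have hslice_int : ∀ z, Integrable (fun a => F (Fin.cons a z)) μ := fun z =>
      .of_bound (hF'.comp measurable_prodMk_right).aestronglyMeasurable M
        (ae_of_all _ fun a => hM _)
    have hslice : ∀ z, Var[fun a => F (Fin.cons a z); μ] ≤ c ^ 2 := fun z =>
      variance_le_sq_of_abs_sub_le (hF'.comp measurable_prodMk_right).aemeasurable fun a a' => by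
        simpa [Fin.update_cons_zero] using hc (Fin.cons a' z) 0 a
    have hmean : Var[fun z => ∫ a, F (Fin.cons a z) ∂μ; Measure.pi fun _ : Fin n => μ]
        ≤ n * c ^ 2 := by
      refine ih hF'.stronglyMeasurable.integral_prod_left'.measurable (fun z => ?_)
        (fun z j b => ?_)
      · simpa using norm_integral_le_of_norm_le_const (μ := μ)
          (f := fun a => F (Fin.cons a z)) (ae_of_all _ fun a => hM (Fin.cons a z))
      · rw [← integral_sub (hslice_int _) (hslice_int _)]
        simpa [Fin.cons_update] using norm_integral_le_of_norm_le_const (μ := μ)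
          (f := fun a => F (Fin.cons a (Function.update z j b)) - F (Fin.cons a z))
          (ae_of_all _ fun a => by simpa [Fin.cons_update] using hc (Fin.cons a z) j.succ b)
    calc _ ≤ c ^ 2 + n * c ^ 2 := variance_prod_le μ _ hF' (fun w => hM _) hslice hmean
      _ = (n + 1 : ℕ) * c ^ 2 := by push_cast; ring

lemma partialDiam_nonneg (ν : Measure ℝ) (α : ℝ) : 0 ≤ partialDiam ν α :=
  Real.sInf_nonneg fun _ ⟨_, _, _, _, hr⟩ => hr ▸ Metric.diam_nonneg

lemma partialDiam_le_diam {ν : Measure ℝ} {α : ℝ} {A : Set ℝ} (hA : MeasurableSet A)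
    (hA_bdd : IsBounded A) (hνA : ENNReal.ofReal α ≤ ν A) : partialDiam ν α ≤ Metric.diam A :=
  csInf_le ⟨0, fun _ ⟨_, _, _, _, hr⟩ => hr ▸ Metric.diam_nonneg⟩ ⟨A, hA, hA_bdd, hνA, rfl⟩

lemma partialDiam_le_of_le_measure_Icc {ν : Measure ℝ} {α m R : ℝ} (hR : 0 ≤ R)
    (hν : ENNReal.ofReal α ≤ ν (Icc (m - R) (m + R))) : partialDiam ν α ≤ 2 * R := by
  have := partialDiam_le_diam measurableSet_Icc (Metric.isBounded_Icc _ _) hν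
  rwa [Real.diam_Icc (by linarith), show m + R - (m - R) = 2 * R by ring] at this

lemma obsDiam_nonneg {Y : Type*} [MeasurableSpace Y] (d : Y → Y → ℝ) (ν : Measure Y) (κ : ℝ) :
    0 ≤ obsDiam d ν κ :=
  Real.sSup_nonneg fun _ ⟨_, _, _, hr⟩ => hr ▸ partialDiam_nonneg _ _

lemma obsDiam_le {Y : Type*} [MeasurableSpace Y] {d : Y → Y → ℝ} {ν : Measure Y} {κ B : ℝ}
    (hB : 0 ≤ B) (h : ∀ f : Y → ℝ, Measurable f → (∀ x y, |f x - f y| ≤ d x y) →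
      partialDiam (ν.map f) (1 - κ) ≤ B) : obsDiam d ν κ ≤ B :=
  Real.sSup_le (fun _ ⟨f, hf, hlip, hr⟩ => hr ▸ h f hf hlip) hB

section Product

open Metric

variable {X : Type*} [MetricSpace X] {n : ℕ} {D : ℝ}

lemma dist_toLp_one (x y : Fin n → X) :
    dist (WithLp.toLp 1 x) (WithLp.toLp 1 y) = ∑ i, dist (x i) (y i) := by
  rw [PiLp.dist_eq_sum (by simp)]
  simp

lemma dist_toLp_one_le (hdist : ∀ a b : X, dist a b ≤ D) (x y : Fin n → X) :
    dist (WithLp.toLp 1 x) (WithLp.toLp 1 y) ≤ n * D := by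
  simpa [dist_toLp_one] using Finset.sum_le_sum fun i (_ : i ∈ Finset.univ) => hdist (x i) (y i)

lemma dist_toLp_one_update (x : Fin n → X) (i : Fin n) (a : X) :
    dist (WithLp.toLp 1 (Function.update x i a)) (WithLp.toLp 1 x) = dist a (x i) := by
  rw [dist_toLp_one, Finset.sum_eq_single i (fun j _ hj => by simp [hj]) (by simp)]
  simp

lemma abs_infDist_toLp_one_le (hdist : ∀ a b : X, dist a b ≤ D) {A : Set (Fin n → X)}
    {a : Fin n → X} (ha : a ∈ A) (x : Fin n → X) :
    |infDist (WithLp.toLp 1 x) (WithLp.toLp 1 '' A)| ≤ n * D := by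
  rw [abs_of_nonneg infDist_nonneg]
  exact (infDist_le_dist_of_mem (mem_image_of_mem _ ha)).trans (dist_toLp_one_le hdist _ _)

lemma lpDist'_le (hD : 0 ≤ D) (hdist : ∀ a b : X, dist a b ≤ D) {p : ℝ≥0∞} (hp : 1 ≤ p)
    (x y : Fin n → X) :
    lpDist' dist p x y ≤
      D ^ (1 - p.toReal⁻¹) * dist (WithLp.toLp 1 x) (WithLp.toLp 1 y) ^ p.toReal⁻¹ := by
  by_cases hp_top : p = ∞
  · -- `∞.toReal = 0`, so the right-hand side is `D ^ 1 * _ ^ 0 = D`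
    simpa [lpDist', hp_top] using Real.iSup_le (fun i => hdist (x i) (y i)) hD
  set q := p.toReal
  have hq : 1 ≤ q := by simpa using ENNReal.toReal_mono hp_top hp
  have hterm : ∀ i, dist (x i) (y i) ^ q ≤ D ^ (q - 1) * dist (x i) (y i) := fun i =>
    calc dist (x i) (y i) ^ q = dist (x i) (y i) ^ (q - 1) * dist (x i) (y i) := by
          rw [← Real.rpow_add_one' dist_nonneg (by linarith), sub_add_cancel]
      _ ≤ D ^ (q - 1) * dist (x i) (y i) := by
          gcongr
          exact hdist _ _
  rw [lpDist', if_neg hp_top, lpDist, dist_toLp_one]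
  calc (∑ i, dist (x i) (y i) ^ q) ^ (1 / q)
      ≤ (D ^ (q - 1) * ∑ i, dist (x i) (y i)) ^ (1 / q) := by
        rw [Finset.mul_sum]
        gcongr with i
        exact hterm i
    _ = D ^ (1 - q⁻¹) * (∑ i, dist (x i) (y i)) ^ q⁻¹ := by
        rw [Real.mul_rpow (by positivity) (by positivity), ← Real.rpow_mul hD]
        congr 2 <;> field_simp

variable [TopologicalSpace.SeparableSpace X] [MeasurableSpace X] [BorelSpace X]
  (μ : Measure X) [IsProbabilityMeasure μ]

lemma measurable_infDist_toLp_one (A : Set (Fin n → X)) :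
    Measurable fun x : Fin n → X => infDist (WithLp.toLp 1 x) (WithLp.toLp 1 '' A) :=
  have : SecondCountableTopology X := UniformSpace.secondCountable_of_separable X
  ((continuous_infDist_pt _).comp (PiLp.continuous_toLp _ _)).measurable

lemma variance_infDist_toLp_one_le (hdist : ∀ a b : X, dist a b ≤ D)
    {A : Set (Fin n → X)} (hA : A.Nonempty) :
    Var[fun x => infDist (WithLp.toLp 1 x) (WithLp.toLp 1 '' A);
      Measure.pi fun _ : Fin n => μ] ≤ n * D ^ 2 := by
  obtain ⟨a₀, ha₀⟩ := hA
  refine variance_pi_le_of_bounded_differences μ (measurable_infDist_toLp_one A)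
    (abs_infDist_toLp_one_le hdist ha₀) (fun x i a => ?_)
  rw [← Real.dist_eq]
  calc _ ≤ dist (WithLp.toLp 1 (Function.update x i a)) (WithLp.toLp 1 x) := by
        simpa using (lipschitz_infDist_pt _).dist_le_mul _ _
    _ ≤ D := by simpa [dist_toLp_one_update] using hdist a (x i)

lemma measure_infDist_toLp_one_ge_le (hdist : ∀ a b : X, dist a b ≤ D)
    {A : Set (Fin n → X)} (hA : 2⁻¹ ≤ Measure.pi (fun _ : Fin n => μ) A) {s : ℝ} (hs : 0 < s) :
    Measure.pi (fun _ : Fin n => μ)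
        {x | √(2 * n) * D + s ≤ infDist (WithLp.toLp 1 x) (WithLp.toLp 1 '' A)}
      ≤ ENNReal.ofReal (n * D ^ 2 / s ^ 2) := by
  set ν := Measure.pi fun _ : Fin n => μ
  set F := fun x : Fin n → X => infDist (WithLp.toLp 1 x) (WithLp.toLp 1 '' A)
  obtain ⟨a⟩ := nonempty_of_isProbabilityMeasure μ
  have hD : 0 ≤ D := dist_nonneg.trans (hdist a a)
  obtain ⟨a₀, ha₀⟩ : A.Nonempty := nonempty_of_measure_ne_zero (μ := ν) fun h => by
    rw [h] at hA
    exact absurd hA (by norm_num)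
  have hF : MemLp F 2 ν := .of_bound (measurable_infDist_toLp_one A).aestronglyMeasurable _
    (ae_of_all _ (abs_infDist_toLp_one_le hdist ha₀))
  have hvar : Var[F; ν] ≤ n * D ^ 2 := variance_infDist_toLp_one_le μ hdist ⟨a₀, ha₀⟩
  have hsqrt : √(2 * Var[F; ν]) ≤ √(2 * n) * D := by
    rw [← Real.sqrt_sq hD, ← Real.sqrt_mul (by positivity)]
    exact Real.sqrt_le_sqrt (by linarith)
  calc ν {x | √(2 * n) * D + s ≤ F x}
      ≤ ν {x | √(2 * Var[F; ν]) + s ≤ F x} :=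
        measure_mono fun x (hx : _ ≤ F x) => show _ ≤ F x by linarith
    _ ≤ ENNReal.ofReal (Var[F; ν] / s ^ 2) := measure_ge_sqrt_two_variance_add_le hF hA
        (fun x hx => infDist_zero_of_mem (mem_image_of_mem _ hx)) hs
    _ ≤ ENNReal.ofReal (n * D ^ 2 / s ^ 2) := by gcongr

theorem partialDiam_map_pi_le_of_holder (hdist : ∀ a b : X, dist a b ≤ D)
    {f : (Fin n → X) → ℝ} (hf : Measurable f) {L β : ℝ} (hL : 0 ≤ L) (hβ : 0 ≤ β)
    (hf_holder : ∀ x y, |f x - f y| ≤ L * dist (WithLp.toLp 1 x) (WithLp.toLp 1 y) ^ β)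
    {s : ℝ} (hs : 0 < s) :
    partialDiam ((Measure.pi fun _ : Fin n => μ).map f) (1 - 2 * (n * D ^ 2 / s ^ 2))
      ≤ 2 * (L * (√(2 * n) * D + s) ^ β) := by
  set ν := Measure.pi fun _ : Fin n => μ
  set r := √(2 * n) * D + s
  obtain ⟨a⟩ := nonempty_of_isProbabilityMeasure μ
  have hr : 0 ≤ r :=
    add_nonneg (mul_nonneg (Real.sqrt_nonneg _) (dist_nonneg.trans (hdist a a))) hs.le
  set far := fun A : Set (Fin n → X) => {x | r ≤ infDist (WithLp.toLp 1 x) (WithLp.toLp 1 '' A)}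
  have hnear : ∀ {A}, 2⁻¹ ≤ ν A → ∀ x ∉ far A, ∃ a ∈ A, |f x - f a| ≤ L * r ^ β := by
    intro A hA x hx
    have hA_ne : A.Nonempty := nonempty_of_measure_ne_zero (μ := ν) fun h => by
      rw [h] at hA
      exact absurd hA (by norm_num)
    obtain ⟨_, ⟨a, ha, rfl⟩, hxa⟩ := (infDist_lt_iff (hA_ne.image _)).1 (not_le.1 hx)
    exact ⟨a, ha, (hf_holder x a).trans (by gcongr)⟩
  have : IsProbabilityMeasure (ν.map f) := Measure.isProbabilityMeasure_map hf.aemeasurable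
  obtain ⟨m, hlo, hhi⟩ := exists_median (ν.map f)
  rw [Measure.map_apply hf measurableSet_Iic] at hlo
  rw [Measure.map_apply hf measurableSet_Ici] at hhi
  have hnear_median : (far (f ⁻¹' Iic m) ∪ far (f ⁻¹' Ici m))ᶜ ⊆
      f ⁻¹' Icc (m - L * r ^ β) (m + L * r ^ β) := by
    intro x hx
    rw [compl_union] at hx
    obtain ⟨a, ha, hxa⟩ := hnear hlo x hx.1
    obtain ⟨b, hb, hxb⟩ := hnear hhi x hx.2
    have := abs_le.1 hxa
    have := abs_le.1 hxb
    simp only [mem_preimage, mem_Iic, mem_Ici, mem_Icc] at ha hb ⊢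
    constructor <;> linarith
  have hfar : ν (far (f ⁻¹' Iic m) ∪ far (f ⁻¹' Ici m)) ≤
      ENNReal.ofReal (2 * (n * D ^ 2 / s ^ 2)) :=
    calc _ ≤ ν (far (f ⁻¹' Iic m)) + ν (far (f ⁻¹' Ici m)) := measure_union_le _ _
      _ ≤ ENNReal.ofReal (n * D ^ 2 / s ^ 2) + ENNReal.ofReal (n * D ^ 2 / s ^ 2) := by
        gcongr <;> exact measure_infDist_toLp_one_ge_le μ hdist ‹_› hs
      _ = _ := by rw [← ENNReal.ofReal_add (by positivity) (by positivity), two_mul]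
  refine partialDiam_le_of_le_measure_Icc (m := m) (mul_nonneg hL (Real.rpow_nonneg hr β)) ?_
  rw [Measure.map_apply hf measurableSet_Icc]
  refine (ofReal_one_sub_le_measure (by positivity) ?_).trans (measure_mono hnear_median)
  rwa [compl_compl]

theorem obsDiam_pi_le (hD : 0 < D) (hdist : ∀ a b : X, dist a b ≤ D) {p : ℝ≥0∞} (hp : 1 ≤ p)
    {t κ : ℝ} (ht : 0 ≤ t) (hκ : 0 < κ) (hn : 0 < n) :
    obsDiam (fun x y : Fin n → X => t * lpDist' dist p x y) (Measure.pi fun _ => μ) κ ≤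
      2 * D ^ (1 - p.toReal⁻¹) * (√2 * D * (1 + (√κ)⁻¹)) ^ p.toReal⁻¹ *
        ((n : ℝ) ^ (1 / (2 * p.toReal)) * t) := by
  set β := p.toReal⁻¹
  have hβ : 0 ≤ β := inv_nonneg.2 ENNReal.toReal_nonneg
  -- chosen so that the two exceptional sets around the median have total mass `κ`
  set s := √(2 * n) * D / √κ
  have hs : 0 < s := by positivity
  have hmass : 1 - 2 * (n * D ^ 2 / s ^ 2) = 1 - κ := by
    simp only [s, div_pow, mul_pow, Real.sq_sqrt (by positivity : (0 : ℝ) ≤ 2 * n),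
      Real.sq_sqrt hκ.le]
    field_simp
  have hr : √(2 * n) * D + s = √n * (√2 * D * (1 + (√κ)⁻¹)) := by
    simp only [s, Real.sqrt_mul zero_le_two]
    field_simp
  have hsqrt : (√n) ^ β = (n : ℝ) ^ (1 / (2 * p.toReal)) := by
    rw [Real.sqrt_eq_rpow, ← Real.rpow_mul n.cast_nonneg]
    congr 1
    simp only [β]
    ring
  refine obsDiam_le (by positivity) fun f hf hlip => ?_
  have := partialDiam_map_pi_le_of_holder μ hdist hf (L := t * D ^ (1 - β))
    (by positivity) hβ (fun x y => (hlip x y).trans ?_) hs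
  · rw [hmass, hr, Real.mul_rpow (by positivity) (by positivity), hsqrt] at this
    linarith
  · rw [mul_assoc]
    exact mul_le_mul_of_nonneg_left (lpDist'_le hD.le hdist hp x y) ht

end Product

theorem levy_family_of_subcritical_scale_general
    {X : Type*} [MetricSpace X] [TopologicalSpace.SeparableSpace X]
    [MeasurableSpace X] [BorelSpace X]
    (μ : Measure X) [IsProbabilityMeasure μ]
    (hbdd : IsBounded (Set.univ : Set X))
    (p : ℝ≥0∞) (hp : 1 ≤ p)
    (t : ℕ → ℝ) (ht : ∀ n, 0 < t n)
    (h0 : Tendsto (fun n : ℕ =>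
        (if p = ∞ then 1 else (n : ℝ) ^ (1 / (2 * p.toReal))) * t n) atTop (𝓝 0))
    (κ : ℝ) (hκ : 0 < κ) :
    Tendsto (fun n : ℕ =>
      obsDiam (fun x y : Fin n → X => t n * lpDist' dist p x y)
        (Measure.pi fun _ : Fin n => μ) κ) atTop (𝓝 0) := by
  obtain ⟨D, hD, hdist⟩ := (Metric.isBounded_iff_exists_ge 1).1 hbdd
  -- for `p = ∞`, `p.toReal = 0` and `n ^ (1 / 0) = n ^ 0 = 1`, so the `if` is redundant
  have h0' : Tendsto (fun n : ℕ => (n : ℝ) ^ (1 / (2 * p.toReal)) * t n) atTop (𝓝 0) := by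
    refine h0.congr fun n => ?_
    split_ifs with hp_top <;> simp [hp_top]
  refine squeeze_zero' (.of_forall fun n => obsDiam_nonneg _ _ _)
    ((eventually_gt_atTop 0).mono fun n hn => obsDiam_pi_le μ (one_pos.trans_le hD)
      (fun a b => hdist trivial trivial) hp (ht n).le hκ hn) ?_
  simpa using h0'.const_mul _

/-- **Corollary 1.4 (1).** Let `X` be a nontrivial mm-space of finite diameter,
`1 ≤ p ≤ ∞`, `δ`-discrete for some `δ > 0` in case `1 < p < ∞`.
If `n^(1/(2p)) t_n → 0` (with `n^(1/(2∞)) := 1`), then `{t_n X_p^n}` is a Lévy family. -/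
theorem levy_family_of_subcritical_scale
    {X : Type*} [MetricSpace X] [CompleteSpace X] [TopologicalSpace.SeparableSpace X]
    [MeasurableSpace X] [BorelSpace X]
    (μ : Measure X) [IsProbabilityMeasure μ]
    (hnt : ∀ x : X, μ ≠ Measure.dirac x)
    (hbdd : IsBounded (Set.univ : Set X))
    (p : ℝ≥0∞) (hp : 1 ≤ p)
    (hdisc : 1 < p → p ≠ ∞ → ∃ δ > (0 : ℝ), ∀ x y : X, x ≠ y → δ ≤ dist x y)
    (t : ℕ → ℝ) (ht : ∀ n, 0 < t n)
    (h0 : Tendsto (fun n : ℕ =>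
        (if p = ∞ then 1 else (n : ℝ) ^ (1 / (2 * p.toReal))) * t n) atTop (𝓝 0))
    (κ : ℝ) (hκ : 0 < κ) :
    Tendsto (fun n : ℕ =>
      obsDiam (fun x y : Fin n → X => t n * lpDist' dist p x y)
        (Measure.pi fun _ : Fin n => μ) κ) atTop (𝓝 0) :=
  levy_family_of_subcritical_scale_general μ hbdd p hp t ht h0 κ hκ
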